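/- arXiv:2401.04487 — 3 statements merged into one kernel-verified Lean document; each statement's English description precedes it below -/
import Mathlib

section
/- Let M be a natural number, ε ∈ (0,1], and c ∈ (0,1]. For any finite sequence a_0,...,a_M with each a_k ∈ [0,1], if ∏_{k=0}^{M} (1 - a_k) ≤ c, then ∏_{k=0}^{M} (1 - a_k·ε) ≤ 1 - (1 - c)·ε. -/
lemma aux_key (ε : ℝ) (hε0 : 0 < ε) (hε1 : ε ≤ 1) (a : ℕ → ℝ) :
    ∀ n : ℕ, (∀ k < n, a k ∈ Set.Icc (0:ℝ) 1) →
      (0 ≤ ∏ k ∈ Finset.range n, (1 - a k)) ∧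
      (∏ k ∈ Finset.range n, (1 - a k)) ≤ 1 ∧
      (∏ k ∈ Finset.range n, (1 - a k * ε)) ≤ 1 - ε + ε * ∏ k ∈ Finset.range n, (1 - a k) := by
  intro n
  induction n with
  | zero => intro _; simp
  | succ n ih =>
    intro ha
    have ha' : ∀ k < n, a k ∈ Set.Icc (0:ℝ) 1 := fun k hk => ha k (Nat.lt_succ_of_lt hk)
    obtain ⟨h0, h1, h2⟩ := ih ha'
    obtain ⟨han0, han1⟩ := ha n (Nat.lt_succ_self n)
    rw [Finset.prod_range_succ, Finset.prod_range_succ]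
    set Q := ∏ k ∈ Finset.range n, (1 - a k) with hQ
    set P := ∏ k ∈ Finset.range n, (1 - a k * ε) with hP
    have hfac : (0:ℝ) ≤ 1 - a n * ε := by nlinarith
    refine ⟨by nlinarith, by nlinarith, ?_⟩
    have : P * (1 - a n * ε) ≤ (1 - ε + ε * Q) * (1 - a n * ε) := by
      exact mul_le_mul_of_nonneg_right h2 hfac
    nlinarith [mul_nonneg (mul_nonneg han0 hε0.le) (mul_nonneg (sub_nonneg.2 hε1) (sub_nonneg.2 h1))]

theorem stmt_0 (M : ℕ) (ε c : ℝ) (hε : ε ∈ Set.Ioc (0:ℝ) 1) (hc : c ∈ Set.Ioc (0:ℝ) 1)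
    (a : ℕ → ℝ) (ha : ∀ k ≤ M, a k ∈ Set.Icc (0:ℝ) 1)
    (h : ∏ k ∈ Finset.range (M + 1), (1 - a k) ≤ c) :
    ∏ k ∈ Finset.range (M + 1), (1 - a k * ε) ≤ 1 - (1 - c) * ε := by
  obtain ⟨hε0, hε1⟩ := hε
  obtain ⟨_, _, h2⟩ := aux_key ε hε0 hε1 a (M + 1)
    (fun k hk => ha k (Nat.lt_succ_iff.mp hk))
  nlinarith
end

section
/- Let b ∈ [0,1), μ ≥ 1 a natural number, and (γ_t)_{t≥1} a sequence in [0,1] such that ∏_{j=0}^{μ} γ_{t+j} ≤ b for all t ≥ 1. Then for any τ ≥ 1 and any t ∈ [1,τ], the sum 1 + ∑_{k=0}^{τ-t-1} ∏_{j=0}^{τ-k-t-1} γ_{t+j} is bounded above by 1 + (μ+1)/(1-b). -/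
lemma aux_prod_le_pow (b : ℝ) (hb : b ∈ Set.Ico (0:ℝ) 1) (μ : ℕ)
    (γ : ℕ → ℝ) (hγ : ∀ t, γ t ∈ Set.Icc (0:ℝ) 1)
    (hprod : ∀ t ≥ 1, ∏ j ∈ Finset.range (μ + 1), γ (t + j) ≤ b) :
    ∀ n t, 1 ≤ t → ∏ j ∈ Finset.range n, γ (t + j) ≤ b ^ (n / (μ + 1)) := by
  intro n
  induction n using Nat.strong_induction_on with
  | _ n ih =>
    intro t ht
    by_cases h : n < μ + 1
    · rw [Nat.div_eq_of_lt h, pow_zero]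
      exact Finset.prod_le_one (fun i _ => (hγ _).1) (fun i _ => (hγ _).2)
    · push_neg at h
      set m := n - (μ + 1) with hm
      have hn : n = (μ + 1) + m := by omega
      rw [hn, Finset.prod_range_add]
      have h1 : ∏ j ∈ Finset.range (μ + 1), γ (t + j) ≤ b := hprod t ht
      have h2 : ∏ j ∈ Finset.range m, γ (t + (μ + 1 + j)) ≤ b ^ (m / (μ + 1)) := by
        have := ih m (by omega) (t + (μ + 1)) (by omega)
        convert this using 2 with j
        ring_nf
      have hq : ((μ + 1) + m) / (μ + 1) = m / (μ + 1) + 1 := by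
        rw [add_comm]
        exact Nat.add_div_right m (by omega)
      rw [hq, pow_succ]
      have hp1 : (0:ℝ) ≤ ∏ j ∈ Finset.range (μ + 1), γ (t + j) :=
        Finset.prod_nonneg (fun i _ => (hγ _).1)
      have hp2 : (0:ℝ) ≤ ∏ j ∈ Finset.range m, γ (t + (μ + 1 + j)) :=
        Finset.prod_nonneg (fun i _ => (hγ _).1)
      calc (∏ j ∈ Finset.range (μ + 1), γ (t + j)) * ∏ j ∈ Finset.range m, γ (t + (μ + 1 + j))
          ≤ b * (b ^ (m / (μ + 1))) := by
            apply mul_le_mul h1 h2 hp2 hb.1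
        _ = b ^ (m / (μ + 1)) * b := by ring

lemma aux_geom (b : ℝ) (hb : b ∈ Set.Ico (0:ℝ) 1) (μ : ℕ) :
    ∀ M, ∑ j ∈ Finset.range ((μ + 1) * M), b ^ (j / (μ + 1)) ≤ (μ + 1) / (1 - b) := by
  have hb1 : (0:ℝ) < 1 - b := by linarith [hb.2]
  intro M
  have heq : ∑ j ∈ Finset.range ((μ + 1) * M), b ^ (j / (μ + 1))
      = (μ + 1 : ℝ) * ∑ q ∈ Finset.range M, b ^ q := by
    induction M with
    | zero => simp
    | succ M ihM =>
      rw [Nat.mul_succ, Finset.sum_range_add, ihM]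
      have hterm : ∀ i ∈ Finset.range (μ + 1),
          b ^ (((μ + 1) * M + i) / (μ + 1)) = b ^ M := by
        intro i hi
        simp only [Finset.mem_range] at hi
        congr 1
        rw [Nat.mul_add_div (by omega), Nat.div_eq_of_lt hi, Nat.add_zero]
      rw [Finset.sum_congr rfl hterm, Finset.sum_const, Finset.card_range,
        Finset.sum_range_succ, nsmul_eq_mul]
      push_cast
      ring
  rw [heq]
  have hgeom : ∑ q ∈ Finset.range M, b ^ q ≤ 1 / (1 - b) := by
    rw [geom_sum_eq (by linarith [hb.2] : b ≠ 1)]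
    have hc : (b ^ M - 1) / (b - 1) = (1 - b ^ M) / (1 - b) := by
      rw [← neg_div_neg_eq]; ring_nf
    rw [hc]
    have : 0 ≤ b ^ M := pow_nonneg hb.1 M
    gcongr
    linarith
  calc (μ + 1 : ℝ) * ∑ q ∈ Finset.range M, b ^ q
      ≤ (μ + 1 : ℝ) * (1 / (1 - b)) := by
        apply mul_le_mul_of_nonneg_left hgeom (by positivity)
    _ = (μ + 1) / (1 - b) := by ring

theorem stmt_9 (b : ℝ) (hb : b ∈ Set.Ico (0:ℝ) 1) (μ : ℕ) (hμ : 1 ≤ μ)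
    (γ : ℕ → ℝ) (hγ : ∀ t, γ t ∈ Set.Icc (0:ℝ) 1)
    (hprod : ∀ t ≥ 1, ∏ j ∈ Finset.range (μ + 1), γ (t + j) ≤ b)
    (τ : ℕ) (hτ : 1 ≤ τ) (t : ℕ) (ht : t ∈ Finset.Icc 1 τ) :
    1 + ∑ k ∈ Finset.range (τ - t), ∏ j ∈ Finset.range (τ - k - t), γ (t + j) ≤
      1 + (μ + 1) / (1 - b) := by
  simp only [Finset.mem_Icc] at ht
  set N := τ - t with hN
  have hstep : ∀ k ∈ Finset.range N,
      (∏ j ∈ Finset.range (τ - k - t), γ (t + j)) ≤ b ^ ((τ - k - t) / (μ + 1)) :=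
    fun k _ => aux_prod_le_pow b hb μ γ hγ hprod _ t ht.1
  have h1 : ∑ k ∈ Finset.range N, ∏ j ∈ Finset.range (τ - k - t), γ (t + j)
      ≤ ∑ k ∈ Finset.range N, b ^ ((τ - k - t) / (μ + 1)) :=
    Finset.sum_le_sum hstep
  have h2 : ∑ k ∈ Finset.range N, b ^ ((τ - k - t) / (μ + 1))
      ≤ ∑ k ∈ Finset.range N, b ^ (k / (μ + 1)) := by
    rw [← Finset.sum_range_reflect (fun k => b ^ (k / (μ + 1))) N]
    apply Finset.sum_le_sum
    intro k hk
    simp only [Finset.mem_range] at hk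
    apply pow_le_pow_of_le_one hb.1 (le_of_lt hb.2)
    have : τ - k - t = N - k := by omega
    rw [this]
    apply Nat.div_le_div_right
    omega
  have h3 : ∑ k ∈ Finset.range N, b ^ (k / (μ + 1))
      ≤ ∑ k ∈ Finset.range ((μ + 1) * N), b ^ (k / (μ + 1)) := by
    apply Finset.sum_le_sum_of_subset_of_nonneg
    · apply Finset.range_subset_range.mpr
      nlinarith [Nat.le_mul_of_pos_left N (show 0 < μ + 1 by omega)]
    · intro i _ _
      exact pow_nonneg hb.1 _
  have h4 := aux_geom b hb μ N
  linarith
end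

section
/- Let c ∈ [0,1), μ ≥ 1 a natural number, and (γ_t)_{t≥1} a sequence in [0,1] with ∏_{j=0}^{μ} γ_{t+j} ≤ c for all t ≥ 1. Then for any τ ≥ 1: ∑_{t=1}^{τ} ∏_{j=0}^{t-1} γ_{1+j} ≤ (μ+1) · ∑_{k=0}^{⌈τ/(μ+1)⌉} c^k ≤ (μ+1)/(1-c). -/
theorem stmt_11 (c : ℝ) (hc : c ∈ Set.Ico (0:ℝ) 1) (μ : ℕ) (hμ : 1 ≤ μ)
    (γ : ℕ → ℝ) (hγ : ∀ t, γ t ∈ Set.Icc (0:ℝ) 1)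
    (hprod : ∀ t ≥ 1, ∏ j ∈ Finset.range (μ + 1), γ (t + j) ≤ c)
    (τ : ℕ) (hτ : 1 ≤ τ) :
    ∑ t ∈ Finset.Icc 1 τ, ∏ j ∈ Finset.range t, γ (1 + j) ≤
        (μ + 1) * ∑ k ∈ Finset.range (⌈(τ : ℝ) / (μ + 1)⌉₊ + 1), c ^ k ∧
      (μ + 1) * ∑ k ∈ Finset.range (⌈(τ : ℝ) / (μ + 1)⌉₊ + 1), c ^ k ≤ (μ + 1) / (1 - c) := by
  obtain ⟨hc0, hc1⟩ := hc
  set m := μ + 1 with hm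
  have hm0 : 0 < m := Nat.succ_pos μ
  -- each term is bounded by c ^ (t / m)
  have prodle : ∀ t : ℕ, ∏ j ∈ Finset.range t, γ (1 + j) ≤ c ^ (t / m) := by
    intro t
    induction t using Nat.strong_induction_on with
    | _ t ih =>
      by_cases h : t < m
      · rw [Nat.div_eq_of_lt h, pow_zero]
        exact Finset.prod_le_one (fun j _ => (hγ _).1) (fun j _ => (hγ _).2)
      · push_neg at h
        have ht : t = (t - m) + m := (Nat.sub_add_cancel h).symm
        have hdiv : t / m = (t - m) / m + 1 := Nat.div_eq_sub_div hm0 h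
        conv_lhs => rw [ht, Finset.prod_range_add]
        rw [hdiv, pow_succ]
        have hblock : ∏ j ∈ Finset.range m, γ (1 + ((t - m) + j)) ≤ c := by
          have := hprod (1 + (t - m)) (by omega)
          simpa [hm, add_assoc] using this
        have h1 := ih (t - m) (by omega)
        exact mul_le_mul h1 hblock
          (Finset.prod_nonneg fun j _ => (hγ _).1) (pow_nonneg hc0 _)
  -- block sum identity
  have blocksum : ∀ N : ℕ, ∑ t ∈ Finset.range (m * N), c ^ (t / m)
      = (m : ℝ) * ∑ k ∈ Finset.range N, c ^ k := by
    intro N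
    induction N with
    | zero => simp
    | succ N ihN =>
      have : m * (N + 1) = m * N + m := by ring
      rw [this, Finset.sum_range_add, ihN]
      have : ∀ j ∈ Finset.range m, c ^ ((m * N + j) / m) = c ^ N := by
        intro j hj
        have hj' : j < m := Finset.mem_range.mp hj
        rw [Nat.mul_add_div hm0, Nat.div_eq_of_lt hj', Nat.add_zero]
      rw [Finset.sum_congr rfl this, Finset.sum_const, Finset.sum_range_succ,
        Finset.card_range, nsmul_eq_mul]
      ring
  set K := ⌈(τ : ℝ) / (μ + 1)⌉₊ with hK
  have hτK : τ < m * (K + 1) := by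
    have h1 : (τ : ℝ) / (μ + 1) ≤ (K : ℝ) := Nat.le_ceil _
    have h3 : τ ≤ m * K := by
      rw [div_le_iff₀ (by positivity)] at h1
      have h2 : (τ : ℝ) ≤ (m : ℝ) * K := by push_cast [hm]; linarith
      exact_mod_cast h2
    have h4 : m * (K + 1) = m * K + m := by ring
    omega
  have hsub : Finset.Icc 1 τ ⊆ Finset.range (m * (K + 1)) := by
    intro t htmem
    rw [Finset.mem_range]
    have := (Finset.mem_Icc.mp htmem).2
    omega
  have main : ∑ t ∈ Finset.Icc 1 τ, ∏ j ∈ Finset.range t, γ (1 + j)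
      ≤ (m : ℝ) * ∑ k ∈ Finset.range (K + 1), c ^ k := by
    calc ∑ t ∈ Finset.Icc 1 τ, ∏ j ∈ Finset.range t, γ (1 + j)
        ≤ ∑ t ∈ Finset.range (m * (K + 1)), ∏ j ∈ Finset.range t, γ (1 + j) :=
          Finset.sum_le_sum_of_subset_of_nonneg hsub
            (fun t _ _ => Finset.prod_nonneg fun j _ => (hγ _).1)
      _ ≤ ∑ t ∈ Finset.range (m * (K + 1)), c ^ (t / m) :=
          Finset.sum_le_sum fun t _ => prodle t
      _ = (m : ℝ) * ∑ k ∈ Finset.range (K + 1), c ^ k := blocksum (K + 1)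
  have hcast : ((μ : ℝ) + 1) = (m : ℝ) := by push_cast [hm]; ring
  constructor
  · rw [hcast]; exact main
  · have h1c : (0:ℝ) < 1 - c := by linarith
    have hgs : ∑ k ∈ Finset.range (K + 1), c ^ k ≤ 1 / (1 - c) := by
      have heq : ∑ k ∈ Finset.range (K + 1), c ^ k = (1 - c ^ (K + 1)) / (1 - c) := by
        rw [geom_sum_eq (ne_of_lt hc1)]
        rw [div_eq_div_iff (by intro h; apply ne_of_lt hc1; linarith) (ne_of_gt h1c)]
        ring
      rw [heq, div_le_div_iff₀ h1c h1c]
      nlinarith [pow_nonneg hc0 (K + 1)]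
    rw [hcast]
    calc (m : ℝ) * ∑ k ∈ Finset.range (K + 1), c ^ k
        ≤ (m : ℝ) * (1 / (1 - c)) :=
          mul_le_mul_of_nonneg_left hgs (by positivity)
      _ = (m : ℝ) / (1 - c) := by ring
end
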